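/- The moments accountant is a special case of the Bayesian accountant: let σ > 0, q ∈ [0, 1], n ∈ ℕ, and define φ(d) = Σ_{k=0}^{n} C(n, k) · q^k · (1 − q)^{n−k} · exp((k² − k)·d² / (2σ²)) for d ≥ 0. Then φ is nondecreasing on [0, ∞), and consequently, for any probability measure μ on a measurable space X and any measurable function d : X → ℝ with |d(x')| ≤ C for μ-almost every x', one has log ∫_X φ(|d(x')|) dμ(x') ≤ log φ(C); i.e. the Bayesian privacy cost of the subsampled Gaussian mechanism, computed with the data-dependent gradient-difference norms |d(x')|, never exceeds the moments-accountant bound computed with the worst-case sensitivity C. -/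

import Mathlib

/-!
Each summand of `φ` is a nonnegative binomial weight times `exp (c_k d²)` with `c_k ≥ 0`, so `φ`
is nondecreasing in `|d|` and `φ 0 = (q + (1 - q))ⁿ = 1`. Hence `1 ≤ φ (|d x'|) ≤ φ C` almost
everywhere, the integral lies in `[1, φ C]`, and `log` is monotone on positive reals.
-/

set_option autoImplicit false

open MeasureTheory ProbabilityTheory ENNReal

/-- The per-iteration Bayesian privacy cost integrand of the subsampled Gaussian mechanism
(with `n = λ + 1`): `φ(d) = Σ_{k=0}^n C(n,k) q^k (1−q)^{n−k} exp((k²−k)d²/(2σ²))`. -/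
noncomputable def phi (σ q : ℝ) (n : ℕ) (d : ℝ) : ℝ :=
  ∑ k ∈ Finset.range (n + 1),
    (n.choose k : ℝ) * q ^ k * (1 - q) ^ (n - k) *
      Real.exp (((k : ℝ) ^ 2 - (k : ℝ)) * d ^ 2 / (2 * σ ^ 2))

section Integral

variable {X : Type*} [MeasurableSpace X] {μ : Measure X} [IsProbabilityMeasure μ]
  {f : ℝ → ℝ} {d : X → ℝ} {C : ℝ}

theorem integral_comp_abs_mem_Icc_of_monotoneOn (hf : MonotoneOn f (Set.Ici 0))
    (hfc : Continuous f) (hd : AEMeasurable d μ) (hdC : ∀ᵐ x ∂μ, |d x| ≤ C) :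
    ∫ x, f |d x| ∂μ ∈ Set.Icc (f 0) (f C) := by
  obtain ⟨x₀, hx₀⟩ := hdC.exists
  have hC : 0 ≤ C := (abs_nonneg _).trans hx₀
  have hbounds : ∀ᵐ x ∂μ, f 0 ≤ f |d x| ∧ f |d x| ≤ f C := by
    filter_upwards [hdC] with x hx
    have hx0 : |d x| ∈ Set.Ici 0 := Set.mem_Ici.2 (abs_nonneg _)
    exact ⟨hf Set.self_mem_Ici hx0 hx0, hf hx0 hC hx⟩
  have hint : Integrable (fun x ↦ f |d x|) μ := by
    refine .of_bound (hfc.comp_aestronglyMeasurable hd.abs.aestronglyMeasurable)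
      (max |f 0| |f C|) ?_
    filter_upwards [hbounds] with x hx
    exact abs_le_max_abs_abs hx.1 hx.2
  constructor
  · simpa using integral_mono_ae (integrable_const (f 0)) hint (hbounds.mono fun _ ↦ And.left)
  · simpa using integral_mono_ae hint (integrable_const (f C)) (hbounds.mono fun _ ↦ And.right)

end Integral

section Phi

variable (σ q : ℝ) (n : ℕ)

theorem phi_zero : phi σ q n 0 = 1 := by
  calc phi σ q n 0
      = ∑ k ∈ Finset.range (n + 1), q ^ k * (1 - q) ^ (n - k) * (n.choose k : ℝ) := by
        simp only [phi]
        exact Finset.sum_congr rfl fun _ _ ↦ by simp; ring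
    _ = 1 := by rw [← add_pow, add_sub_cancel, one_pow]

theorem continuous_phi : Continuous (phi σ q n) := by
  unfold phi
  fun_prop

theorem phi_monotoneOn (hq0 : 0 ≤ q) (hq1 : q ≤ 1) :
    MonotoneOn (phi σ q n) (Set.Ici 0) := by
  intro a ha b _ hab
  refine Finset.sum_le_sum fun k _ ↦ ?_
  have hk : (0 : ℝ) ≤ (k : ℝ) ^ 2 - k := by
    rcases k with _ | k
    · simp
    · push_cast; nlinarith
  have hweight : 0 ≤ (n.choose k : ℝ) * q ^ k * (1 - q) ^ (n - k) := by
    have : 0 ≤ 1 - q := by linarith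
    positivity
  gcongr

end Phi

theorem bayesian_accountant_le_moments_accountant_general
    (σ : ℝ) (q : ℝ) (hq0 : 0 ≤ q) (hq1 : q ≤ 1) (n : ℕ) :
    MonotoneOn (phi σ q n) (Set.Ici (0 : ℝ)) ∧
    ∀ {X : Type*} [MeasurableSpace X] (μ : Measure X), IsProbabilityMeasure μ →
      ∀ (d : X → ℝ) (C : ℝ), Measurable d → (∀ᵐ x' ∂μ, |d x'| ≤ C) →
        Real.log (∫ x', phi σ q n |d x'| ∂μ) ≤ Real.log (phi σ q n C) := by
  refine ⟨phi_monotoneOn σ q n hq0 hq1, fun μ _ d C hd hdC ↦ ?_⟩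
  obtain ⟨hlower, hupper⟩ := integral_comp_abs_mem_Icc_of_monotoneOn
    (phi_monotoneOn σ q n hq0 hq1) (continuous_phi σ q n) hd.aemeasurable hdC
  rw [phi_zero] at hlower
  exact Real.log_le_log (by linarith) hupper

/-- The moments accountant is a special case of the Bayesian accountant:
`φ` is nondecreasing on `[0, ∞)`, and for any probability measure `μ` and measurable
`d : X → ℝ` with `|d(x')| ≤ C` `μ`-a.e., the Bayesian privacy cost
`log ∫ φ(|d(x')|) dμ(x')` never exceeds the moments-accountant bound `log φ(C)`. -/
theorem bayesian_accountant_le_moments_accountant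
    (σ : ℝ) (hσ : 0 < σ) (q : ℝ) (hq0 : 0 ≤ q) (hq1 : q ≤ 1) (n : ℕ) :
    MonotoneOn (phi σ q n) (Set.Ici (0 : ℝ)) ∧
    ∀ {X : Type*} [MeasurableSpace X] (μ : Measure X), IsProbabilityMeasure μ →
      ∀ (d : X → ℝ) (C : ℝ), Measurable d → (∀ᵐ x' ∂μ, |d x'| ≤ C) →
        Real.log (∫ x', phi σ q n |d x'| ∂μ) ≤ Real.log (phi σ q n C) :=
  bayesian_accountant_le_moments_accountant_general σ q hq0 hq1 n
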